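/- Let μ ∈ 𝒫(X). Let Q : X × U → ℝ be such that for each x ∈ X there exists q_x : A → ℝ with Q(x,u) = ⟨q_x,u⟩ − Ω(u) for all u ∈ U, and let Q̂ : X × U → ℝ be any function such that for each x the function Q̂(x,·) attains a maximum over U. Denote by f_Q(x) and f_{Q̂}(x) maximizers of Q(x,·) and Q̂(x,·) over U respectively. Then ‖H2(μ,Q) − H2(μ,Q̂)‖₁ ≤ √θ · K1 · √(‖Q − Q̂‖_∞), where θ := 4/ρ and H2(μ,Q)(·) := ∑_{x∈X} P(·|x,f_Q(x),μ) μ(x). (Estimate (mainbound) in the proof of Theorem 3.) -/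

import Mathlib

/-!
Strong convexity of `Ω` makes `u ↦ ⟨q_x, u⟩ - Ω u` fall off quadratically away from its
maximiser `f_Q(x)`, at rate `ρ / 2`; since `f_Q̂(x)` loses at most `2 ‖Q - Q̂‖_∞` for `Q`, the two
maximisers are `√(4 ‖Q - Q̂‖_∞ / ρ)`-close in `l1`. Changing a single action moves `p(·|x,a,μ)` by
at most `2 K1`, so by Dobrushin's coupling argument `u ↦ P(·|x,u,μ)` is `K1`-Lipschitz on
probability vectors, and averaging over `μ` gives the estimate.
-/

namespace MFG

open Finset

def IsProb {E : Type*} [Fintype E] (μ : E → ℝ) : Prop :=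
  (∀ e, 0 ≤ μ e) ∧ ∑ e, μ e = 1

def l1 {E : Type*} [Fintype E] (μ ν : E → ℝ) : ℝ :=
  ∑ e, |μ e - ν e|

def ind {E : Type*} [DecidableEq E] (x y : E) : ℝ :=
  if x = y then 0 else 1

def RewardLip {X A : Type*} [Fintype X] [Fintype A] [DecidableEq X] [DecidableEq A]
    (r : X → A → (X → ℝ) → ℝ) (L1 : ℝ) : Prop :=
  ∀ x x' a a' μ μ', IsProb μ → IsProb μ' →
    |r x a μ - r x' a' μ'| ≤ L1 * (ind x x' + 2 * ind a a' + l1 μ μ')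

def KernelLip {X A : Type*} [Fintype X] [Fintype A] [DecidableEq X] [DecidableEq A]
    (p : X → A → (X → ℝ) → X → ℝ) (K1 : ℝ) : Prop :=
  ∀ x x' a a' μ μ', IsProb μ → IsProb μ' →
    l1 (p x a μ) (p x' a' μ') ≤ K1 * (ind x x' + 2 * ind a a' + l1 μ μ')

def IsKernel {X A : Type*} [Fintype X] [Fintype A]
    (p : X → A → (X → ℝ) → X → ℝ) : Prop :=
  ∀ x a μ, IsProb μ → IsProb (p x a μ)

def RewardNonneg {X A : Type*} [Fintype X] [Fintype A]
    (r : X → A → (X → ℝ) → ℝ) : Prop :=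
  ∀ x a μ, IsProb μ → 0 ≤ r x a μ

def OmegaLip {A : Type*} [Fintype A] (Ω : (A → ℝ) → ℝ) (Lreg : ℝ) : Prop :=
  ∀ u v, IsProb u → IsProb v → |Ω u - Ω v| ≤ Lreg * l1 u v

def StrongConvex {A : Type*} [Fintype A] (Ω : (A → ℝ) → ℝ)
    (DΩ : (A → ℝ) → (A → ℝ)) (ρ : ℝ) : Prop :=
  ∀ u v, IsProb u → IsProb v →
    Ω u + (∑ a, DΩ u a * (v a - u a)) + ρ / 2 * (l1 u v) ^ 2 ≤ Ω v

noncomputable def Tbell {X A : Type*} [Fintype X] [Fintype A]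
    (r : X → A → (X → ℝ) → ℝ) (p : X → A → (X → ℝ) → X → ℝ)
    (Ω : (A → ℝ) → ℝ) (β : ℝ) (μ : X → ℝ) (v : X → ℝ) (x : X) : ℝ :=
  ⨆ u : {w : A → ℝ // IsProb w},
    ((∑ a, r x a μ * u.1 a) - Ω u.1 + β * ∑ y, v y * (∑ a, p x a μ y * u.1 a))

noncomputable def Qmax {X A : Type*} [Fintype A] (Q : X → (A → ℝ) → ℝ) (y : X) : ℝ :=
  ⨆ u : {w : A → ℝ // IsProb w}, Q y u.1

noncomputable def Lbell {X A : Type*} [Fintype X] [Fintype A]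
    (r : X → A → (X → ℝ) → ℝ) (p : X → A → (X → ℝ) → X → ℝ)
    (Ω : (A → ℝ) → ℝ) (β : ℝ) (μ : X → ℝ) (Q : X → (A → ℝ) → ℝ)
    (x : X) (u : A → ℝ) : ℝ :=
  (∑ a, r x a μ * u a) - Ω u + β * ∑ y, Qmax Q y * (∑ a, p x a μ y * u a)

def BddFixedPoint {X A : Type*} [Fintype X] [Fintype A]
    (r : X → A → (X → ℝ) → ℝ) (p : X → A → (X → ℝ) → X → ℝ)
    (Ω : (A → ℝ) → ℝ) (β : ℝ) (μ : X → ℝ) (Q : X → (A → ℝ) → ℝ) : Prop :=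
  (∃ C, ∀ x u, IsProb u → |Q x u| ≤ C) ∧
  (∀ x u, IsProb u → Q x u = Lbell r p Ω β μ Q x u)

lemma l1_self {E : Type*} [Fintype E] (u : E → ℝ) : l1 u u = 0 := by
  simp [l1]

lemma eq_of_l1_eq_zero {E : Type*} [Fintype E] {u v : E → ℝ} (h : l1 u v = 0) : u = v :=
  funext fun e => sub_eq_zero.mp <| abs_eq_zero.mp <|
    (sum_eq_zero_iff_of_nonneg fun _ _ => abs_nonneg _).mp h e (mem_univ e)

lemma IsProb.convexComb {E : Type*} [Fintype E] {u v : E → ℝ} (hu : IsProb u) (hv : IsProb v)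
    {s : ℝ} (hs0 : 0 ≤ s) (hs1 : s ≤ 1) : IsProb fun e => s * u e + (1 - s) * v e := by
  have hs1' : 0 ≤ 1 - s := by linarith
  refine ⟨fun e => by have := hu.1 e; have := hv.1 e; positivity, ?_⟩
  rw [sum_add_distrib, ← mul_sum, ← mul_sum, hu.2, hv.2]
  ring

lemma l1_convexComb_left {E : Type*} [Fintype E] (u v : E → ℝ) {s : ℝ} (hs1 : s ≤ 1) :
    l1 (fun e => s * u e + (1 - s) * v e) u = (1 - s) * l1 u v := by
  rw [l1, l1, mul_sum]
  refine sum_congr rfl fun e _ => ?_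
  rw [show s * u e + (1 - s) * v e - u e = (1 - s) * (v e - u e) by ring, abs_mul,
    abs_of_nonneg (by linarith), abs_sub_comm]

lemma l1_convexComb_right {E : Type*} [Fintype E] (u v : E → ℝ) {s : ℝ} (hs0 : 0 ≤ s) :
    l1 (fun e => s * u e + (1 - s) * v e) v = s * l1 u v := by
  rw [l1, l1, mul_sum]
  refine sum_congr rfl fun e _ => ?_
  rw [show s * u e + (1 - s) * v e - v e = s * (u e - v e) by ring, abs_mul, abs_of_nonneg hs0]

/-- Averaging the two first-order inequalities at the intermediate point cancels its
`DΩ` terms. -/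
lemma StrongConvex.apply_convexComb_le {A : Type*} [Fintype A] {Ω : (A → ℝ) → ℝ}
    {DΩ : (A → ℝ) → (A → ℝ)} {ρ : ℝ} (hΩ : StrongConvex Ω DΩ ρ) {u v : A → ℝ}
    (hu : IsProb u) (hv : IsProb v) {s : ℝ} (hs0 : 0 ≤ s) (hs1 : s ≤ 1) :
    Ω (fun a => s * u a + (1 - s) * v a) + ρ / 2 * s * (1 - s) * l1 u v ^ 2 ≤
      s * Ω u + (1 - s) * Ω v := by
  set w : A → ℝ := fun a => s * u a + (1 - s) * v a with hw
  have hwu := hΩ w u (hu.convexComb hv hs0 hs1) hu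
  have hwv := hΩ w v (hu.convexComb hv hs0 hs1) hv
  rw [l1_convexComb_left u v hs1] at hwu
  rw [l1_convexComb_right u v hs0] at hwv
  have hcancel : s * ∑ a, DΩ w a * (u a - w a) + (1 - s) * ∑ a, DΩ w a * (v a - w a) = 0 := by
    rw [mul_sum, mul_sum, ← sum_add_distrib]
    exact sum_eq_zero fun a _ => by simp only [hw]; ring
  linarith [mul_le_mul_of_nonneg_left hwu hs0,
    mul_le_mul_of_nonneg_left hwv (by linarith : 0 ≤ 1 - s)]

open Filter Topology in
lemma le_of_forall_mul_le_of_lt_one {a b : ℝ} (h : ∀ s, 0 < s → s < 1 → s * a ≤ b) : a ≤ b := by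
  have hlim : Tendsto (fun s => s * a) (𝓝[<] 1) (𝓝 a) := by
    simpa using ((continuous_mul_const a).tendsto 1).mono_left nhdsWithin_le_nhds
  exact le_of_tendsto hlim
    (eventually_of_mem (Ioo_mem_nhdsLT one_pos) fun s hs => h s hs.1 hs.2)

/-- `DΩ` need not be a gradient, so there is no first-order optimality condition at `f`;
instead compare `f` with the points `s • f + (1 - s) • v` of the segment and let `s → 1`. -/
lemma StrongConvex.sq_l1_le_sub_of_isMax {A : Type*} [Fintype A] {Ω : (A → ℝ) → ℝ}
    {DΩ : (A → ℝ) → (A → ℝ)} {ρ : ℝ} (hΩ : StrongConvex Ω DΩ ρ) (q : A → ℝ) {f v : A → ℝ}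
    (hf : IsProb f) (hv : IsProb v)
    (hmax : ∀ u, IsProb u → (∑ a, q a * u a) - Ω u ≤ (∑ a, q a * f a) - Ω f) :
    ρ / 2 * l1 f v ^ 2 ≤ ((∑ a, q a * f a) - Ω f) - ((∑ a, q a * v a) - Ω v) := by
  refine le_of_forall_mul_le_of_lt_one fun s hs0 hs1 => ?_
  have hseg := hΩ.apply_convexComb_le hf hv hs0.le hs1.le
  have hmid := hmax _ (hf.convexComb hv hs0.le hs1.le)
  have hlin : ∑ a, q a * (s * f a + (1 - s) * v a) =
      s * ∑ a, q a * f a + (1 - s) * ∑ a, q a * v a := by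
    rw [mul_sum, mul_sum, ← sum_add_distrib]
    exact sum_congr rfl fun a _ => by ring
  rw [hlin] at hmid
  have hpos : 0 < 1 - s := by linarith
  nlinarith

lemma sum_mul_sub_sum_mul_eq {ι : Type*} [Fintype ι] (α β f : ι → ℝ) :
    (∑ b, β b) * ∑ a, α a * f a - (∑ a, α a) * ∑ b, β b * f b =
      ∑ a, ∑ b, α a * β b * (f a - f b) := by
  rw [mul_comm, sum_mul_sum, sum_mul_sum, ← sum_sub_distrib]
  refine sum_congr rfl fun a _ => ?_
  rw [← sum_sub_distrib]
  exact sum_congr rfl fun b _ => by ring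

lemma l1_sum_mul_le {X Y : Type*} [Fintype X] [Fintype Y] (R S : X → Y → ℝ) (μ : X → ℝ)
    (hμ : ∀ x, 0 ≤ μ x) :
    l1 (fun y => ∑ x, R x y * μ x) (fun y => ∑ x, S x y * μ x) ≤
      ∑ x, μ x * l1 (R x) (S x) := by
  calc ∑ y, |∑ x, R x y * μ x - ∑ x, S x y * μ x|
      = ∑ y, |∑ x, μ x * (R x y - S x y)| := by
        simp only [← sum_sub_distrib, mul_comm (μ _), sub_mul]
    _ ≤ ∑ y, ∑ x, |μ x * (R x y - S x y)| := sum_le_sum fun y _ => abs_sum_le_sum_abs _ _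
    _ = ∑ x, μ x * l1 (R x) (S x) := by
        rw [sum_comm]
        simp only [l1, mul_sum, abs_mul, abs_of_nonneg (hμ _)]

lemma sum_abs_sum_sum_mul_sub_le {ι Y : Type*} [Fintype ι] [Fintype Y] (P : ι → Y → ℝ)
    {α β : ι → ℝ} (hα : ∀ a, 0 ≤ α a) (hβ : ∀ b, 0 ≤ β b) :
    ∑ y, |∑ a, ∑ b, α a * β b * (P a y - P b y)| ≤
      ∑ a, ∑ b, α a * β b * l1 (P a) (P b) := by
  calc ∑ y, |∑ a, ∑ b, α a * β b * (P a y - P b y)|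
      ≤ ∑ y, ∑ a, ∑ b, α a * β b * |P a y - P b y| := by
        refine sum_le_sum fun y _ => (abs_sum_le_sum_abs _ _).trans
          (sum_le_sum fun a _ => (abs_sum_le_sum_abs _ _).trans_eq ?_)
        simp only [abs_mul, abs_of_nonneg (hα _), abs_of_nonneg (hβ _)]
    _ = ∑ a, ∑ b, α a * β b * l1 (P a) (P b) := by
        rw [sum_comm]
        refine sum_congr rfl fun a _ => ?_
        rw [sum_comm]
        simp only [l1, mul_sum]

/-- Dobrushin's contraction estimate. Coupling the positive and negative parts of `u - v` by
their product makes every row difference `P a - P b` appear with a nonnegative weight. -/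
lemma l1_sum_mul_le_mul_l1 {ι Y : Type*} [Fintype ι] [Fintype Y] (P : ι → Y → ℝ) (K : ℝ)
    (hP : ∀ a b, l1 (P a) (P b) ≤ 2 * K) (u v : ι → ℝ) (huv : ∑ a, u a = ∑ a, v a) :
    l1 (fun y => ∑ a, P a y * u a) (fun y => ∑ a, P a y * v a) ≤ K * l1 u v := by
  set w : ι → ℝ := fun a => u a - v a with hw
  set s : ℝ := ∑ a, (w a)⁺ with hs
  have hs0 : 0 ≤ s := sum_nonneg fun a _ => posPart_nonneg _
  have hneg : ∑ a, (w a)⁻ = s := by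
    have : ∑ a, ((w a)⁺ - (w a)⁻) = 0 := by
      simp only [posPart_sub_negPart, hw, sum_sub_distrib, huv, sub_self]
    rw [sum_sub_distrib] at this
    linarith
  have hl1 : l1 u v = 2 * s := by
    rw [l1, two_mul]
    nth_rewrite 2 [← hneg]
    rw [hs, ← sum_add_distrib]
    exact sum_congr rfl fun a _ => (posPart_add_negPart _).symm
  have hrow : ∀ y, s * (∑ a, P a y * u a - ∑ a, P a y * v a) =
      ∑ a, ∑ b, (w a)⁺ * (w b)⁻ * (P a y - P b y) := fun y => by
    rw [← sum_mul_sub_sum_mul_eq, hneg, ← hs, ← mul_sub, ← sum_sub_distrib, ← sum_sub_distrib]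
    congr 1
    exact sum_congr rfl fun a _ => by
      rw [← sub_mul, posPart_sub_negPart]; simp only [hw]; ring
  have hcoupled : s * l1 (fun y => ∑ a, P a y * u a) (fun y => ∑ a, P a y * v a) ≤
      s * (K * (2 * s)) := by
    calc s * ∑ y, |∑ a, P a y * u a - ∑ a, P a y * v a|
        = ∑ y, |∑ a, ∑ b, (w a)⁺ * (w b)⁻ * (P a y - P b y)| := by
          simp only [mul_sum, ← hrow, abs_mul, abs_of_nonneg hs0]
      _ ≤ ∑ a, ∑ b, (w a)⁺ * (w b)⁻ * l1 (P a) (P b) :=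
          sum_abs_sum_sum_mul_sub_le P (fun a => posPart_nonneg (w a))
            (fun b => negPart_nonneg (w b))
      _ ≤ ∑ a, ∑ b, (w a)⁺ * (w b)⁻ * (2 * K) := by
          gcongr with a _ b _
          exact hP a b
      _ = (∑ a, (w a)⁺) * (∑ b, (w b)⁻) * (2 * K) := by
          rw [sum_mul_sum, sum_mul]
          simp only [sum_mul]
      _ = s * (K * (2 * s)) := by
          rw [hneg, ← hs]
          ring
  rcases hs0.eq_or_lt with hs_zero | hs_pos
  · rw [eq_of_l1_eq_zero (by rw [hl1, ← hs_zero, mul_zero] : l1 u v = 0), l1_self, l1_self,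
      mul_zero]
  · rw [hl1]
    exact le_of_mul_le_mul_left hcoupled hs_pos

lemma KernelLip.l1_le_two_mul {X A : Type*} [Fintype X] [Fintype A] [DecidableEq X]
    [DecidableEq A] {p : X → A → (X → ℝ) → X → ℝ} {K1 : ℝ} (hp : KernelLip p K1) (hK1 : 0 ≤ K1)
    {μ : X → ℝ} (hμ : IsProb μ) (x : X) (a b : A) :
    l1 (p x a μ) (p x b μ) ≤ 2 * K1 := by
  have h := hp x x a b μ μ hμ hμ
  have hind : ind a b ≤ 1 := by unfold ind; split_ifs <;> norm_num
  rw [show ind x x = 0 from if_pos rfl, l1_self] at h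
  nlinarith

lemma l1_le_sqrt_of_isMax {A : Type*} [Fintype A] {Ω : (A → ℝ) → ℝ} {DΩ : (A → ℝ) → (A → ℝ)}
    {ρ : ℝ} (hρ : 0 < ρ) (hΩ : StrongConvex Ω DΩ ρ) (q : A → ℝ) {F G : (A → ℝ) → ℝ}
    (hF : ∀ u, IsProb u → F u = (∑ a, q a * u a) - Ω u) {f g : A → ℝ} (hf : IsProb f)
    (hg : IsProb g) (hfmax : ∀ u, IsProb u → F u ≤ F f) (hgmax : ∀ u, IsProb u → G u ≤ G g)
    {C : ℝ} (hC : ∀ u, IsProb u → |F u - G u| ≤ C) :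
    l1 f g ≤ Real.sqrt (4 / ρ) * Real.sqrt C := by
  have hgrowth : ρ / 2 * l1 f g ^ 2 ≤ F f - F g := by
    rw [hF f hf, hF g hg]
    exact hΩ.sq_l1_le_sub_of_isMax q hf hg fun u hu => by
      rw [← hF u hu, ← hF f hf]; exact hfmax u hu
  have hgap : F f - F g ≤ 2 * C := by
    have hCf := abs_le.mp (hC f hf)
    have hCg := abs_le.mp (hC g hg)
    linarith [hgmax f hf]
  have hsq : l1 f g ^ 2 ≤ 4 / ρ * C := by
    rw [div_mul_eq_mul_div, le_div_iff₀ hρ]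
    nlinarith
  rw [← Real.sqrt_mul (by positivity)]
  exact Real.le_sqrt_of_sq_le hsq

theorem statement16_general {X A : Type*} [Fintype X] [Fintype A]
    [DecidableEq X] [DecidableEq A]
    (p : X → A → (X → ℝ) → X → ℝ) (K1 : ℝ) (hK1 : 0 ≤ K1)
    (hp : KernelLip p K1)
    (Ω : (A → ℝ) → ℝ) (DΩ : (A → ℝ) → (A → ℝ)) (ρ : ℝ) (hρ : 0 < ρ)
    (hΩ : StrongConvex Ω DΩ ρ)
    (μ : X → ℝ) (hμ : IsProb μ)
    (Q Qhat : X → (A → ℝ) → ℝ) (qx : X → A → ℝ)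
    (hQform : ∀ x u, IsProb u → Q x u = (∑ a, qx x a * u a) - Ω u)
    (fQ fQhat : X → A → ℝ)
    (hfQ : ∀ x, IsProb (fQ x)) (hfQhat : ∀ x, IsProb (fQhat x))
    (hfQmax : ∀ x u, IsProb u → Q x u ≤ Q x (fQ x))
    (hfQhatmax : ∀ x u, IsProb u → Qhat x u ≤ Qhat x (fQhat x)) :
    ∀ C : ℝ, (∀ x u, IsProb u → |Q x u - Qhat x u| ≤ C) →
      l1 (fun y => ∑ x, (∑ a, p x a μ y * fQ x a) * μ x)
         (fun y => ∑ x, (∑ a, p x a μ y * fQhat x a) * μ x) ≤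
        Real.sqrt (4 / ρ) * K1 * Real.sqrt C := by
  intro C hC
  have hpolicy : ∀ x, l1 (fQ x) (fQhat x) ≤ Real.sqrt (4 / ρ) * Real.sqrt C := fun x =>
    l1_le_sqrt_of_isMax hρ hΩ (qx x) (hQform x) (hfQ x) (hfQhat x) (hfQmax x) (hfQhatmax x)
      (hC x)
  calc _ ≤ ∑ x, μ x * l1 (fun y => ∑ a, p x a μ y * fQ x a)
          (fun y => ∑ a, p x a μ y * fQhat x a) := l1_sum_mul_le _ _ μ hμ.1
    _ ≤ ∑ x, μ x * (K1 * (Real.sqrt (4 / ρ) * Real.sqrt C)) := by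
        gcongr with x _
        · exact hμ.1 x
        refine (l1_sum_mul_le_mul_l1 (fun a => p x a μ) K1 (hp.l1_le_two_mul hK1 hμ x) _ _
          (by rw [(hfQ x).2, (hfQhat x).2])).trans ?_
        exact mul_le_mul_of_nonneg_left (hpolicy x) hK1
    _ = Real.sqrt (4 / ρ) * K1 * Real.sqrt C := by
        rw [← sum_mul, hμ.2]
        ring

/-- estimate (mainbound) in the proof of Theorem 3:
`‖H2(μ,Q) - H2(μ,Q̂)‖₁ ≤ √θ K1 √(‖Q - Q̂‖_∞)` with `θ = 4/ρ`. -/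
theorem statement16 {X A : Type*} [Fintype X] [Fintype A] [Nonempty X] [Nonempty A]
    [DecidableEq X] [DecidableEq A]
    (p : X → A → (X → ℝ) → X → ℝ) (K1 : ℝ) (hK1 : 0 ≤ K1)
    (hp_prob : IsKernel p) (hp : KernelLip p K1)
    (Ω : (A → ℝ) → ℝ) (DΩ : (A → ℝ) → (A → ℝ)) (ρ : ℝ) (hρ : 0 < ρ)
    (hΩ : StrongConvex Ω DΩ ρ)
    (μ : X → ℝ) (hμ : IsProb μ)
    (Q Qhat : X → (A → ℝ) → ℝ) (qx : X → A → ℝ)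
    (hQform : ∀ x u, IsProb u → Q x u = (∑ a, qx x a * u a) - Ω u)
    (fQ fQhat : X → A → ℝ)
    (hfQ : ∀ x, IsProb (fQ x)) (hfQhat : ∀ x, IsProb (fQhat x))
    (hfQmax : ∀ x u, IsProb u → Q x u ≤ Q x (fQ x))
    (hfQhatmax : ∀ x u, IsProb u → Qhat x u ≤ Qhat x (fQhat x)) :
    ∀ C : ℝ, (∀ x u, IsProb u → |Q x u - Qhat x u| ≤ C) →
      l1 (fun y => ∑ x, (∑ a, p x a μ y * fQ x a) * μ x)
         (fun y => ∑ x, (∑ a, p x a μ y * fQhat x a) * μ x) ≤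
        Real.sqrt (4 / ρ) * K1 * Real.sqrt C :=
  statement16_general p K1 hK1 hp Ω DΩ ρ hρ hΩ μ hμ Q Qhat qx hQform fQ fQhat hfQ hfQhat hfQmax
    hfQhatmax

end MFG
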